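/- arXiv:2601.16840 — 2 statements merged into one kernel-verified Lean document; each statement's English description precedes it below -/
import Mathlib

section
/- Any convex combination σ = q|ψ⟩⟨ψ| + (1−q)|a⟩⟨a|⊗|b⟩⟨b| with 0 < q ≤ 1, where |ψ⟩ is an entangled pure state of a bipartite system and |a⟩⊗|b⟩ is a product pure state, is an entangled (non-separable) state. -/
/-!
Separable states have a positive semidefinite partial transpose (Peres), and this survives
compression to any 2 ⊗ 2 block. As ψ is entangled, some 2 × 2 block Ψ of its coefficient
matrix is invertible. For a test vector with coefficient matrix X, the partial-transpose form
of |ψ⟩⟨ψ| is tr(G Ḡ) with G = Xᴴ Ψ, while that of the product state is |tr(G R)|² with R of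
rank one. The form tr(G Ḡ) is negative on antisymmetric G; correcting an antisymmetric G by a
multiple of the symmetric part of R̄ keeps q tr(G Ḡ) + (1 - q) |tr(G R)|² negative, and
X = (G adj Ψ)ᴴ realises such a G up to the factor det Ψ.
-/

noncomputable section
open Matrix

/-- Outer product |v⟩⟨v|. -/
def ketbra {α : Type*} (v : α → ℂ) : Matrix α α ℂ :=
  Matrix.of fun x y => v x * star (v y)

/-- Separability across the cut α|β: a nonnegative combination of
product pure states. -/
def SepState {α β : Type*} [Fintype α] [Fintype β]
    (M : Matrix (α × β) (α × β) ℂ) : Prop :=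
  ∃ (n : ℕ) (w : Fin n → ℝ) (u : Fin n → α → ℂ) (v : Fin n → β → ℂ),
    (∀ i, 0 ≤ w i) ∧
      M = ∑ i, ((w i : ℝ) : ℂ) • ketbra (fun x => u i x.1 * v i x.2)

open ComplexConjugate
open scoped ComplexOrder

namespace Matrix

variable {α β R : Type*} [Semiring R]

def partialTranspose : Matrix (α × β) (α × β) R →ₗ[R] Matrix (α × β) (α × β) R where
  toFun M := of fun p r => M (p.1, r.2) (r.1, p.2)
  map_add' _ _ := rfl
  map_smul' _ _ := rfl

theorem partialTranspose_apply (M : Matrix (α × β) (α × β) R) (p r : α × β) :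
    partialTranspose M p r = M (p.1, r.2) (r.1, p.2) := rfl

theorem partialTranspose_submatrix_prodMap {γ δ : Type*} (M : Matrix (α × β) (α × β) R)
    (f : γ → α) (g : δ → β) :
    partialTranspose (M.submatrix (Prod.map f g) (Prod.map f g)) =
      (partialTranspose M).submatrix (Prod.map f g) (Prod.map f g) := rfl

end Matrix

theorem partialTranspose_ketbra_prod {α β : Type*} (u : α → ℂ) (v : β → ℂ) :
    partialTranspose (ketbra fun x : α × β => u x.1 * v x.2) =
      ketbra fun x : α × β => u x.1 * star (v x.2) := by
  ext p r
  simp only [partialTranspose_apply, ketbra, of_apply, star_mul', star_star]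
  ring

theorem exists_minor_ne_zero_of_not_product {α β : Type*} {ψ : α × β → ℂ}
    (hψ : ¬ ∃ (u : α → ℂ) (v : β → ℂ), ψ = fun x => u x.1 * v x.2) :
    ∃ x₁ x₂ y₁ y₂, ψ (x₁, y₁) * ψ (x₂, y₂) - ψ (x₁, y₂) * ψ (x₂, y₁) ≠ 0 := by
  by_contra! hminor
  obtain ⟨⟨x₀, y₀⟩, h₀⟩ : ∃ p, ψ p ≠ 0 := by
    by_contra! hzero
    exact hψ ⟨0, 0, funext fun p => by simp [hzero p]⟩
  refine hψ ⟨fun x => ψ (x, y₀), fun y => ψ (x₀, y) / ψ (x₀, y₀), funext fun ⟨x, y⟩ => ?_⟩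
  field_simp
  linear_combination sub_eq_zero.mp (hminor x x₀ y y₀)

section Finite

variable {α β : Type*} [Fintype α] [Fintype β]

theorem posSemidef_ketbra (w : α → ℂ) : (ketbra w).PosSemidef :=
  posSemidef_vecMulVec_self_star w

theorem SepState.posSemidef_partialTranspose {M : Matrix (α × β) (α × β) ℂ} (hM : SepState M) :
    (partialTranspose M).PosSemidef := by
  obtain ⟨n, w, u, v, hw, rfl⟩ := hM
  rw [map_sum]
  refine posSemidef_sum _ fun i _ => ?_
  rw [map_smul, partialTranspose_ketbra_prod]
  exact (posSemidef_ketbra _).smul (Complex.zero_le_real.2 (hw i))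

theorem star_dotProduct_ketbra_mulVec (w χ : α → ℂ) :
    star χ ⬝ᵥ (ketbra w *ᵥ χ) = Complex.normSq (star χ ⬝ᵥ w) := by
  rw [show ketbra w = vecMulVec w (star w) from rfl, vecMulVec_mulVec, op_smul_eq_smul,
    dotProduct_smul, star_dotProduct, smul_eq_mul, Complex.normSq_eq_conj_mul_self]
  rfl

theorem star_dotProduct_prod_star (X : Matrix α β ℂ) (a : α → ℂ) (b : β → ℂ) :
    star (fun p : α × β => X p.1 p.2) ⬝ᵥ (fun p : α × β => a p.1 * star (b p.2)) =
      star b ⬝ᵥ (Xᴴ *ᵥ a) := by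
  simp only [dotProduct, mulVec, Fintype.sum_prod_type, conjTranspose_apply, Pi.star_apply,
    Finset.mul_sum]
  rw [Finset.sum_comm]
  exact Finset.sum_congr rfl fun _ _ => Finset.sum_congr rfl fun _ _ => by ring

theorem star_dotProduct_partialTranspose_ketbra_mulVec (X Ψ : Matrix α β ℂ) :
    star (fun p : α × β => X p.1 p.2) ⬝ᵥ
        (partialTranspose (ketbra fun p : α × β => Ψ p.1 p.2) *ᵥ fun p => X p.1 p.2) =
      (Xᴴ * Ψ * (Xᴴ * Ψ)ᴴᵀ).trace := by
  simp only [dotProduct, mulVec, trace, diag, mul_apply, Fintype.sum_prod_type,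
    partialTranspose_apply, ketbra, of_apply, conjTranspose_apply, transpose_apply,
    Pi.star_apply, star_sum, star_mul', star_star, Finset.mul_sum, Finset.sum_mul]
  rw [Finset.sum_comm]
  refine Finset.sum_congr rfl fun _ _ => ?_
  conv_lhs => enter [2, p₁]; rw [Finset.sum_comm]
  rw [Finset.sum_comm]
  refine Finset.sum_congr rfl fun _ _ => ?_
  rw [Finset.sum_comm]
  exact Finset.sum_congr rfl fun _ _ => Finset.sum_congr rfl fun _ _ => by ring

end Finite

theorem exists_trace_add_normSq_trace_neg_of_det_eq_zero {q r : ℝ} (hq : 0 < q) (hr : 0 ≤ r)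
    {R : Matrix (Fin 2) (Fin 2) ℂ} (hR : R.det = 0) :
    ∃ G : Matrix (Fin 2) (Fin 2) ℂ,
      (q : ℂ) * (G * Gᴴᵀ).trace + r * Complex.normSq (G * R).trace < 0 := by
  rw [det_fin_two] at hR
  set x := R 0 0
  set y := R 1 1
  set z₁ := R 1 0
  set z₂ := R 0 1
  set k := z₁ - z₂
  -- `N` is the squared Frobenius norm of `R + Rᵀ`.
  set N := 4 * Complex.normSq x + 4 * Complex.normSq y + 2 * Complex.normSq (z₁ + z₂) with hN_def
  set t := 4 * q + r * N
  have hN : 2 * Complex.normSq k ≤ N := by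
    have hz : ‖z₁ * conj z₂‖ = ‖x‖ * ‖y‖ := by
      rw [norm_mul, Complex.norm_conj, ← norm_mul, ← norm_mul, mul_comm z₁, ← sub_eq_zero.1 hR]
    have hre := neg_le_of_abs_le (hz ▸ Complex.abs_re_le_norm (z₁ * conj z₂))
    rw [hN_def, Complex.normSq_add, Complex.normSq_sub]
    simp only [Complex.normSq_eq_norm_sq]
    nlinarith [sq_nonneg (‖x‖ - ‖y‖)]
  have hNc : (N : ℂ) =
      4 * (x * conj x) + 4 * (y * conj y) + 2 * ((z₁ + z₂) * conj (z₁ + z₂)) := by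
    simp only [N, Complex.mul_conj]
    push_cast
    ring
  -- `G = t J - 2 r k (R + Rᵀ)‾` with `J` antisymmetric; `t` is chosen so that `tr (G R) = 4 q k`.
  set G : Matrix (Fin 2) (Fin 2) ℂ :=
    !![-(4 * r * k * conj x), t - 2 * r * k * conj (z₁ + z₂);
      -t - 2 * r * k * conj (z₁ + z₂), -(4 * r * k * conj y)]
  have hℓ : (G * R).trace = 4 * q * k := by
    simp only [G, trace_fin_two, mul_apply, Fin.sum_univ_two, of_apply, cons_val', cons_val_zero,
      cons_val_one, empty_val', cons_val_fin_one, t]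
    push_cast
    rw [hNc]
    ring
  have hτ : (G * Gᴴᵀ).trace = ((4 * r ^ 2 * Complex.normSq k * N - 2 * t ^ 2 : ℝ) : ℂ) := by
    simp only [G, trace_fin_two, mul_apply, Fin.sum_univ_two, of_apply, cons_val', cons_val_zero,
      cons_val_one, empty_val', cons_val_fin_one, conjTranspose_apply, transpose_apply]
    push_cast
    rw [hNc, ← Complex.mul_conj]
    simp only [star_neg, star_sub, star_mul', map_add, Complex.conj_conj, Complex.star_def,
      Complex.conj_ofReal, map_ofNat]
    ring
  have hℓ_sq : Complex.normSq (4 * q * k) = 16 * q ^ 2 * Complex.normSq k := by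
    rw [show (4 * q * k : ℂ) = ((4 * q : ℝ) : ℂ) * k by push_cast; ring, Complex.normSq_mul,
      Complex.normSq_ofReal]
    ring
  refine ⟨G, ?_⟩
  rw [hℓ, hτ, hℓ_sq, ← Complex.ofReal_mul, ← Complex.ofReal_mul, ← Complex.ofReal_add,
    ← Complex.ofReal_zero, Complex.real_lt_real]
  have hk := Complex.normSq_nonneg k
  have ht : 0 < t := show 0 < 4 * q + r * N by nlinarith
  -- the left-hand side equals `2 q t (2 r |k|² - t)`
  nlinarith [mul_pos (mul_pos hq ht) (show 0 < 4 * q + r * (N - 2 * Complex.normSq k) by nlinarith)]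

theorem not_posSemidef_partialTranspose_qubits {Ψ : Matrix (Fin 2) (Fin 2) ℂ} (hΨ : Ψ.det ≠ 0)
    (a b : Fin 2 → ℂ) {q r : ℝ} (hq : 0 < q) (hr : 0 ≤ r) :
    ¬ (partialTranspose ((q : ℂ) • ketbra (fun p : Fin 2 × Fin 2 => Ψ p.1 p.2) +
        (r : ℂ) • ketbra fun p : Fin 2 × Fin 2 => a p.1 * b p.2)).PosSemidef := by
  intro h
  obtain ⟨G, hG⟩ := exists_trace_add_normSq_trace_neg_of_det_eq_zero
    (mul_pos hq (Complex.normSq_pos.2 hΨ)) hr (det_vecMulVec (adjugate Ψ *ᵥ a) (star b))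
  set X := (G * adjugate Ψ)ᴴ
  have hXΨ : Xᴴ * Ψ = Ψ.det • G := by
    rw [conjTranspose_conjTranspose, Matrix.mul_assoc, adjugate_mul, Matrix.mul_smul,
      Matrix.mul_one]
  have hℓ : star b ⬝ᵥ (Xᴴ *ᵥ a) = (G * vecMulVec (adjugate Ψ *ᵥ a) (star b)).trace := by
    rw [mul_vecMulVec, trace_vecMulVec, conjTranspose_conjTranspose, ← mulVec_mulVec,
      dotProduct_comm]
  have hform := h.dotProduct_mulVec_nonneg fun p => X p.1 p.2
  rw [map_add, map_smul, map_smul, partialTranspose_ketbra_prod, add_mulVec, smul_mulVec,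
    smul_mulVec, dotProduct_add, dotProduct_smul, dotProduct_smul,
    star_dotProduct_partialTranspose_ketbra_mulVec, star_dotProduct_ketbra_mulVec,
    star_dotProduct_prod_star, hXΨ, hℓ] at hform
  refine (hform.trans_lt (lt_of_eq_of_lt ?_ hG)).false
  simp only [smul_eq_mul, conjTranspose_smul, transpose_smul, Matrix.smul_mul, Matrix.mul_smul,
    trace_smul, Complex.ofReal_mul, ← Complex.mul_conj, Complex.star_def]
  ring

theorem stmt5_general {α β : Type*} [Fintype α] [Fintype β] (q : ℝ) (hq0 : 0 < q) (hq1 : q ≤ 1)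
    (ψ : α × β → ℂ) (a : α → ℂ) (b : β → ℂ)
    (hent : ¬ ∃ (u : α → ℂ) (v : β → ℂ), ψ = fun x => u x.1 * v x.2) :
    ¬ SepState ((q : ℂ) • ketbra ψ +
        ((1 - q : ℝ) : ℂ) • ketbra (fun x : α × β => a x.1 * b x.2)) := by
  intro hsep
  obtain ⟨x₁, x₂, y₁, y₂, hminor⟩ := exists_minor_ne_zero_of_not_product hent
  set i := ![x₁, x₂]
  set j := ![y₁, y₂]
  have hPPT := hsep.posSemidef_partialTranspose.submatrix (Prod.map i j)
  rw [← partialTranspose_submatrix_prodMap] at hPPT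
  refine not_posSemidef_partialTranspose_qubits (Ψ := of fun k l => ψ (i k, j l)) ?_ (a ∘ i)
    (b ∘ j) hq0 (sub_nonneg.2 hq1) hPPT
  simpa [det_fin_two, i, j] using hminor

/-- any convex combination σ = q|ψ⟩⟨ψ| + (1−q)|a⟩⟨a|⊗|b⟩⟨b|
with 0 < q ≤ 1, |ψ⟩ an entangled pure state and |a⟩⊗|b⟩ a product pure
state, is entangled (non-separable). -/
theorem stmt5 {α β : Type*} [Fintype α] [Fintype β] (q : ℝ) (hq0 : 0 < q) (hq1 : q ≤ 1)
    (ψ : α × β → ℂ) (a : α → ℂ) (b : β → ℂ)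
    (hψ : ∑ x, Complex.normSq (ψ x) = 1)
    (ha : ∑ x, Complex.normSq (a x) = 1)
    (hb : ∑ x, Complex.normSq (b x) = 1)
    (hent : ¬ ∃ (u : α → ℂ) (v : β → ℂ), ψ = fun x => u x.1 * v x.2) :
    ¬ SepState ((q : ℂ) • ketbra ψ +
        ((1 - q : ℝ) : ℂ) • ketbra (fun x : α × β => a x.1 * b x.2)) :=
  stmt5_general q hq0 hq1 ψ a b hent
end
end

section
/- For 0 < p < 1 and |ψ⟩ = Σ_{i=0}^{2} a_i |ii⟩ with all a_i ≠ 0, the three-qutrit state ρ = p|ψ⟩⟨ψ|⊗|0⟩⟨0| + (1−p)|0⟩⟨0|⊗|ψ⟩⟨ψ| has non-positive partial transpose across every one of the three bipartitions A|BC, B|AC, AB|C, and hence is entangled across every bipartition. -/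
noncomputable section
open Matrix
open scoped ComplexOrder

/-- Index type for three qutrits A, B, C. -/
abbrev T3 := Fin 3 × Fin 3 × Fin 3

/-- |ψ⟩_{AB} ⊗ |0⟩_C with |ψ⟩ = Σ aᵢ|ii⟩. -/
def u₁ (a : Fin 3 → ℂ) : T3 → ℂ :=
  fun x => (if x.1 = x.2.1 then a x.1 else 0) * (if x.2.2 = 0 then 1 else 0)

/-- |0⟩_A ⊗ |ψ⟩_{BC}. -/
def u₂ (a : Fin 3 → ℂ) : T3 → ℂ :=
  fun x => (if x.1 = 0 then 1 else 0) * (if x.2.1 = x.2.2 then a x.2.1 else 0)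

/-- ρ = p|ψ⟩⟨ψ|⊗|0⟩⟨0| + (1−p)|0⟩⟨0|⊗|ψ⟩⟨ψ|. -/
def ρ (p : ℝ) (a : Fin 3 → ℂ) : Matrix T3 T3 ℂ :=
  (p : ℂ) • ketbra (u₁ a) + ((1 - p : ℝ) : ℂ) • ketbra (u₂ a)

/-- Partial transpose on A. -/
def ptA (M : Matrix T3 T3 ℂ) : Matrix T3 T3 ℂ :=
  Matrix.of fun x y => M (y.1, x.2) (x.1, y.2)

/-- Partial transpose on B. -/
def ptB (M : Matrix T3 T3 ℂ) : Matrix T3 T3 ℂ :=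
  Matrix.of fun x y => M (x.1, y.2.1, x.2.2) (y.1, x.2.1, y.2.2)

/-- Partial transpose on C. -/
def ptC (M : Matrix T3 T3 ℂ) : Matrix T3 T3 ℂ :=
  Matrix.of fun x y => M (x.1, x.2.1, y.2.2) (y.1, y.2.1, x.2.2)

/-- ρ reindexed for the B|AC cut. -/
def ρB (p : ℝ) (a : Fin 3 → ℂ) :
    Matrix (Fin 3 × (Fin 3 × Fin 3)) (Fin 3 × (Fin 3 × Fin 3)) ℂ :=
  Matrix.of fun x y => ρ p a (x.2.1, x.1, x.2.2) (y.2.1, y.1, y.2.2)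

/-- ρ reindexed for the AB|C cut. -/
def ρAB (p : ℝ) (a : Fin 3 → ℂ) :
    Matrix ((Fin 3 × Fin 3) × Fin 3) ((Fin 3 × Fin 3) × Fin 3) ℂ :=
  Matrix.of fun x y => ρ p a (x.1.1, x.1.2, x.2) (y.1.1, y.1.2, y.2)

/-!
A positive semidefinite matrix with a zero diagonal entry has the whole corresponding row equal
to zero, since the `2 × 2` principal minor `0 · A j j - |A i j|²` must be nonnegative. Each partial
transpose of `ρ` has such a row with a nonzero entry: for `ptA`, the diagonal entry at `|010⟩`
vanishes while the entry coupling it to `|100⟩` is `p a₁ ā₀`. Separable states have positive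
semidefinite partial transposes (Peres), and the partial transposes of `ρB` and `ρAB` on their
first factor are reindexings of `ptB ρ` and of the transpose of `ptC ρ`.
-/

theorem Matrix.PosSemidef.apply_eq_zero_of_diag_eq_zero {𝕜 n : Type*} [RCLike 𝕜] [Fintype n]
    {A : Matrix n n 𝕜} (hA : A.PosSemidef) {i : n} (hi : A i i = 0) (j : n) : A i j = 0 := by
  have hdet := (hA.submatrix ![i, j]).det_nonneg
  simp only [det_fin_two, submatrix_apply, Matrix.cons_val_zero, Matrix.cons_val_one, hi,
    zero_mul, zero_sub, Left.nonneg_neg_iff] at hdet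
  rw [← hA.isHermitian.apply j i] at hdet
  exact (CStarRing.mul_star_self_eq_zero_iff _).mp (le_antisymm hdet (mul_star_self_nonneg _))

theorem Matrix.not_posSemidef_of_diag_eq_zero {𝕜 n : Type*} [RCLike 𝕜] [Fintype n]
    {A : Matrix n n 𝕜} {i j : n} (hi : A i i = 0) (hij : A i j ≠ 0) : ¬ A.PosSemidef :=
  fun hA => hij (hA.apply_eq_zero_of_diag_eq_zero hi j)

def partialTransposeFst {α β : Type*} (M : Matrix (α × β) (α × β) ℂ) :
    Matrix (α × β) (α × β) ℂ :=
  Matrix.of fun x y => M (y.1, x.2) (x.1, y.2)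

theorem posSemidef_ofReal_smul_ketbra {α : Type*} [Fintype α] {w : ℝ} (hw : 0 ≤ w)
    (v : α → ℂ) : ((w : ℂ) • ketbra v).PosSemidef :=
  (posSemidef_vecMulVec_self_star v).smul (Complex.zero_le_real.mpr hw)

theorem partialTransposeFst_ketbra_mul {α β : Type*} (u : α → ℂ) (v : β → ℂ) :
    partialTransposeFst (ketbra fun x : α × β => u x.1 * v x.2) =
      ketbra fun x : α × β => star (u x.1) * v x.2 := by
  ext x y
  simp only [partialTransposeFst, ketbra, Matrix.of_apply, star_mul', star_star]
  ring

theorem SepState.posSemidef_partialTransposeFst {α β : Type*} [Fintype α] [Fintype β]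
    {M : Matrix (α × β) (α × β) ℂ} (h : SepState M) : (partialTransposeFst M).PosSemidef := by
  obtain ⟨n, w, u, v, hw, rfl⟩ := h
  have hpt : partialTransposeFst (∑ i, ((w i : ℝ) : ℂ) • ketbra fun x : α × β => u i x.1 * v i x.2)
      = ∑ i, ((w i : ℝ) : ℂ) • ketbra fun x : α × β => star (u i x.1) * v i x.2 := by
    simp only [← partialTransposeFst_ketbra_mul]
    ext x y
    simp [partialTransposeFst, Matrix.sum_apply]
  rw [hpt]
  exact posSemidef_sum _ fun i _ => posSemidef_ofReal_smul_ketbra (hw i) _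

section
variable (p : ℝ) (a : Fin 3 → ℂ)

theorem ptB_ρ_eq_submatrix :
    ptB (ρ p a) = (partialTransposeFst (ρB p a)).submatrix
      (fun x : T3 => (x.2.1, x.1, x.2.2)) (fun x : T3 => (x.2.1, x.1, x.2.2)) :=
  rfl

theorem ptC_ρ_eq_transpose_submatrix :
    ptC (ρ p a) = ((partialTransposeFst (ρAB p a)).submatrix
      (fun x : T3 => ((x.1, x.2.1), x.2.2)) (fun x : T3 => ((x.1, x.2.1), x.2.2)))ᵀ :=
  rfl

variable {p a}

theorem not_posSemidef_ptA_ρ (hp : p ≠ 0) (h₀ : a 0 ≠ 0) (h₁ : a 1 ≠ 0) :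
    ¬ (ptA (ρ p a)).PosSemidef :=
  not_posSemidef_of_diag_eq_zero (i := (0, 1, 0)) (j := (1, 0, 0))
    (by simp [ptA, ρ, ketbra, u₁, u₂]) (by simp [ptA, ρ, ketbra, u₁, u₂, *])

theorem not_posSemidef_ptB_ρ (hp : p ≠ 0) (h₀ : a 0 ≠ 0) (h₁ : a 1 ≠ 0) :
    ¬ (ptB (ρ p a)).PosSemidef :=
  not_posSemidef_of_diag_eq_zero (i := (0, 1, 0)) (j := (1, 0, 0))
    (by simp [ptB, ρ, ketbra, u₁, u₂]) (by simp [ptB, ρ, ketbra, u₁, u₂, *])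

theorem not_posSemidef_ptC_ρ (hp : p ≠ 1) (h₀ : a 0 ≠ 0) (h₁ : a 1 ≠ 0) :
    ¬ (ptC (ρ p a)).PosSemidef :=
  not_posSemidef_of_diag_eq_zero (i := (0, 0, 1)) (j := (0, 1, 0))
    (by simp [ptC, ρ, ketbra, u₁, u₂])
    (by simp [ptC, ρ, ketbra, u₁, u₂, *, sub_eq_zero, eq_comm (a := (1 : ℂ))])

end

theorem stmt7_general (p : ℝ) (hp0 : 0 < p) (hp1 : p < 1) (a : Fin 3 → ℂ)
    (ha : ∀ i, a i ≠ 0) :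
    ¬ (ptA (ρ p a)).PosSemidef ∧ ¬ (ptB (ρ p a)).PosSemidef ∧
    ¬ (ptC (ρ p a)).PosSemidef ∧
    ¬ SepState (ρ p a) ∧ ¬ SepState (ρB p a) ∧ ¬ SepState (ρAB p a) := by
  have hA := not_posSemidef_ptA_ρ hp0.ne' (ha 0) (ha 1)
  have hB := not_posSemidef_ptB_ρ hp0.ne' (ha 0) (ha 1)
  have hC := not_posSemidef_ptC_ρ hp1.ne (ha 0) (ha 1)
  refine ⟨hA, hB, hC, fun h => hA h.posSemidef_partialTransposeFst, fun h => hB ?_,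
    fun h => hC ?_⟩
  · rw [ptB_ρ_eq_submatrix]
    exact h.posSemidef_partialTransposeFst.submatrix _
  · rw [ptC_ρ_eq_transpose_submatrix]
    exact (h.posSemidef_partialTransposeFst.submatrix _).transpose

/-- for 0 < p < 1 and all aᵢ ≠ 0, ρ has non-positive partial
transpose across each of A|BC, B|AC, AB|C, and hence is entangled across
every bipartition. -/
theorem stmt7 (p : ℝ) (hp0 : 0 < p) (hp1 : p < 1) (a : Fin 3 → ℂ)
    (ha : ∀ i, a i ≠ 0) (hnorm : ∑ i, Complex.normSq (a i) = 1) :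
    ¬ (ptA (ρ p a)).PosSemidef ∧ ¬ (ptB (ρ p a)).PosSemidef ∧
    ¬ (ptC (ρ p a)).PosSemidef ∧
    ¬ SepState (ρ p a) ∧ ¬ SepState (ρB p a) ∧ ¬ SepState (ρAB p a) :=
  stmt7_general p hp0 hp1 a ha
end
end
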